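/- Let C be a dagger category, J a category, Ω a weakly initial class of objects of J, and let (L, (l_A)) be a dagger limit of (D, Ω) and (M, (m_A)) a dagger limit of (E, Ω), for diagrams D, E : J ⥤ C. Let σ : D ⟹ E be an adjointable natural transformation. Then for all objects A, B of J one has m_B ∘ m_A† ∘ σ_A = σ_B ∘ l_B ∘ l_A†. -/
import Mathlib


open CategoryTheory

universe v u v₁ u₁ v₂ u₂

class DaggerCategory (C : Type u) [Category.{v} C] where
  dag : ∀ {A B : C}, (A ⟶ B) → (B ⟶ A)
  dag_id : ∀ (A : C), dag (𝟙 A) = 𝟙 A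
  dag_comp : ∀ {A B X : C} (f : A ⟶ B) (g : B ⟶ X), dag (f ≫ g) = dag g ≫ dag f
  dag_dag : ∀ {A B : C} (f : A ⟶ B), dag (dag f) = f

postfix:max "†" => DaggerCategory.dag

section Defs

variable {C : Type u} [Category.{v} C] [DaggerCategory C]

/-- A morphism `f` is a partial isometry if `f ∘ f† ∘ f = f`. -/
def IsPartialIsometry {A B : C} (f : A ⟶ B) : Prop :=
  f ≫ f† ≫ f = f

/-- A morphism `f : A ⟶ B` is unitary if `f† ∘ f = 𝟙 A` and `f ∘ f† = 𝟙 B`. -/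
def IsUnitary {A B : C} (f : A ⟶ B) : Prop :=
  f ≫ f† = 𝟙 A ∧ f† ≫ f = 𝟙 B

/-- A morphism `f` is dagger monic (an isometry) if `f† ∘ f = 𝟙`. -/
def DaggerMonic {A B : C} (f : A ⟶ B) : Prop :=
  f ≫ f† = 𝟙 A

/-- `(L, l)` is a limit cone over the diagram `D`. -/
def IsLimitCone {J : Type u₁} [Category.{v₁} J] (D : J ⥤ C) (L : C)
    (l : ∀ j : J, L ⟶ D.obj j) : Prop :=
  (∀ {j j' : J} (f : j ⟶ j'), l j ≫ D.map f = l j') ∧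
  (∀ (M : C) (m : ∀ j : J, M ⟶ D.obj j),
    (∀ {j j' : J} (f : j ⟶ j'), m j ≫ D.map f = m j') →
    ∃! g : M ⟶ L, ∀ j : J, g ≫ l j = m j)

/-- A class of objects `Ω` is weakly initial when every object admits a morphism
from some member of `Ω`. -/
def WeaklyInitial {J : Type u₁} [Category.{v₁} J] (Ω : Set J) : Prop :=
  ∀ B : J, ∃ A ∈ Ω, Nonempty (A ⟶ B)

/-- `(L, l)` is a dagger limit of `(D, Ω)`: a limit cone whose legs at `Ω` are
partial isometries with pairwise commuting induced projections. -/
def IsDaggerLimit {J : Type u₁} [Category.{v₁} J] (D : J ⥤ C) (Ω : Set J) (L : C)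
    (l : ∀ j : J, L ⟶ D.obj j) : Prop :=
  IsLimitCone D L l ∧
  (∀ j ∈ Ω, IsPartialIsometry (l j)) ∧
  (∀ j ∈ Ω, ∀ j' ∈ Ω,
    (l j ≫ (l j)†) ≫ (l j' ≫ (l j')†) = (l j' ≫ (l j')†) ≫ (l j ≫ (l j)†))

end Defs

/-- A natural transformation `σ : D ⟶ E` between functors into a dagger category is
adjointable when the componentwise daggers form a natural transformation `E ⟶ D`. -/
def Adjointable {C : Type u} [Category.{v} C] [DaggerCategory C]
    {J : Type u₁} [Category.{v₁} J] {D E : J ⥤ C} (σ : D ⟶ E) : Prop :=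
  ∀ {j j' : J} (f : j ⟶ j'), E.map f ≫ (σ.app j')† = (σ.app j)† ≫ D.map f

/-- Given dagger limits `(L, l)` of `(D, Ω)` and `(M, m)` of `(E, Ω)` and an
adjointable natural transformation `σ : D ⟹ E`, the square
`m_B ∘ m_A† ∘ σ_A = σ_B ∘ l_B ∘ l_A†` commutes for all `A, B`. -/
theorem connecting_maps {C : Type u} [Category.{v} C] [DaggerCategory C]
    {J : Type u₁} [Category.{v₁} J] (D E : J ⥤ C) (Ω : Set J) (hΩ : WeaklyInitial Ω)
    {L M : C} (l : ∀ j : J, L ⟶ D.obj j) (m : ∀ j : J, M ⟶ E.obj j)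
    (hL : IsDaggerLimit D Ω L l) (hM : IsDaggerLimit E Ω M m)
    (σ : D ⟶ E) (hσ : Adjointable σ) :
    ∀ j j' : J, σ.app j ≫ (m j)† ≫ m j' = (l j)† ≫ l j' ≫ σ.app j' := by
  obtain ⟨⟨hLcone, hLex⟩, hLpi, hLcomm⟩ := hL
  obtain ⟨⟨hMcone, hMex⟩, hMpi, hMcomm⟩ := hM
  -- mediating map f : L ⟶ M over σ
  obtain ⟨f, hf0, -⟩ := hMex L (fun j => l j ≫ σ.app j) (by
    intro j j' h
    rw [Category.assoc, ← σ.naturality, ← Category.assoc, hLcone])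
  -- mediating map g : M ⟶ L over σ†
  obtain ⟨g, hg0, -⟩ := hLex M (fun j => m j ≫ (σ.app j)†) (by
    intro j j' h
    rw [Category.assoc, ← hσ, ← Category.assoc, hMcone])
  have hf : ∀ j, f ≫ m j = l j ≫ σ.app j := hf0
  have hg : ∀ j, g ≫ l j = m j ≫ (σ.app j)† := hg0
  have Mpi : ∀ j ∈ Ω, m j ≫ (m j)† ≫ m j = m j := hMpi
  have Lpi : ∀ j ∈ Ω, l j ≫ (l j)† ≫ l j = l j := hLpi
  -- daggered partial isometries
  have dMpi : ∀ j ∈ Ω, (m j)† ≫ m j ≫ (m j)† = (m j)† := by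
    intro j hj
    have t := congrArg (fun x => x†) (Mpi j hj)
    simpa [DaggerCategory.dag_comp, DaggerCategory.dag_dag, Category.assoc] using t
  have dLpi : ∀ j ∈ Ω, (l j)† ≫ l j ≫ (l j)† = (l j)† := by
    intro j hj
    have t := congrArg (fun x => x†) (Lpi j hj)
    simpa [DaggerCategory.dag_comp, DaggerCategory.dag_dag, Category.assoc] using t
  -- normalized commuting projections
  have Mcomm : ∀ j ∈ Ω, ∀ j' ∈ Ω,
      m j ≫ (m j)† ≫ m j' ≫ (m j')† = m j' ≫ (m j')† ≫ m j ≫ (m j)† := by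
    intro j hj j' hj'
    simpa [Category.assoc] using hMcomm j hj j' hj'
  have Lcomm : ∀ j ∈ Ω, ∀ j' ∈ Ω,
      l j ≫ (l j)† ≫ l j' ≫ (l j')† = l j' ≫ (l j')† ≫ l j ≫ (l j)† := by
    intro j hj j' hj'
    simpa [Category.assoc] using hLcomm j hj j' hj'
  -- reassociated versions
  have hf' := fun j => reassoc_of% (hf j)
  have hg' := fun j => reassoc_of% (hg j)
  have Mpi' := fun j (hj : j ∈ Ω) => reassoc_of% (Mpi j hj)
  have Lpi' := fun j (hj : j ∈ Ω) => reassoc_of% (Lpi j hj)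
  have dMpi' := fun j (hj : j ∈ Ω) => reassoc_of% (dMpi j hj)
  have dLpi' := fun j (hj : j ∈ Ω) => reassoc_of% (dLpi j hj)
  have Mcomm' := fun j (hj : j ∈ Ω) j' (hj' : j' ∈ Ω) => reassoc_of% (Mcomm j hj j' hj')
  have Lcomm' := fun j (hj : j ∈ Ω) j' (hj' : j' ∈ Ω) => reassoc_of% (Lcomm j hj j' hj')
  -- key identity K: σ_A ≫ m_A† ≫ m_A = l_A† ≫ l_A ≫ σ_A  for A ∈ Ω
  have K : ∀ A ∈ Ω, σ.app A ≫ (m A)† ≫ m A = (l A)† ≫ l A ≫ σ.app A := by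
    intro A hA
    have c1 : (l A)† ≫ l A ≫ σ.app A ≫ (m A)† ≫ m A = (l A)† ≫ l A ≫ σ.app A := by
      rw [← hf' A, Mpi A hA, hf A]
    have c2d : (m A)† ≫ m A ≫ (σ.app A)† = (m A)† ≫ m A ≫ (σ.app A)† ≫ (l A)† ≫ l A := by
      rw [← hg A, ← hg' A, Lpi A hA]
    have c2 : σ.app A ≫ (m A)† ≫ m A = (l A)† ≫ l A ≫ σ.app A ≫ (m A)† ≫ m A := by
      have t := congrArg (fun x => x†) c2d
      simpa [DaggerCategory.dag_comp, DaggerCategory.dag_dag, Category.assoc] using t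
    exact c2.trans c1
  have K' := fun A (hA : A ∈ Ω) => reassoc_of% (K A hA)
  -- identity (iv): l_A ≫ l_A† ≫ g† = l_A ≫ σ_A ≫ m_A†
  have iv : ∀ A : J, l A ≫ (l A)† ≫ g† = l A ≫ σ.app A ≫ (m A)† := by
    intro A
    have t : g ≫ l A ≫ (l A)† = m A ≫ (σ.app A)† ≫ (l A)† := hg' A _
    have td := congrArg (fun x => x†) t
    simpa [DaggerCategory.dag_comp, DaggerCategory.dag_dag, Category.assoc] using td
  have iv' := fun A => reassoc_of% (iv A)
  -- identity (v): f ≫ m_B = l_B ≫ l_B† ≫ g† ≫ m_B  for B ∈ Ω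
  have v : ∀ B ∈ Ω, f ≫ m B = l B ≫ (l B)† ≫ g† ≫ m B := by
    intro B hB
    rw [iv' B, K B hB, Lpi' B hB, hf B]
  have v' := fun B (hB : B ∈ Ω) => reassoc_of% (v B hB)
  -- the main statement for A, B ∈ Ω
  have main : ∀ A ∈ Ω, ∀ B ∈ Ω,
      σ.app A ≫ (m A)† ≫ m B = (l A)† ≫ l B ≫ σ.app B := by
    intro A hA B hB
    have e₁ : σ.app A ≫ (m A)† ≫ m B
        = (l A)† ≫ l B ≫ (l B)† ≫ l A ≫ σ.app A ≫ (m A)† ≫ m B := by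
      conv_lhs => rw [← dMpi' A hA, K' A hA, ← hf' A, ← Mpi B hB, Mcomm' A hA B hB,
        v' B hB, ← Mcomm' A hA B hB, Mpi B hB, ← dLpi' A hA, Lcomm' A hA B hB,
        iv' A, dMpi' A hA]
    have e₂ : (l A)† ≫ l B ≫ σ.app B
        = (l A)† ≫ l B ≫ (l B)† ≫ l A ≫ σ.app A ≫ (m A)† ≫ m B := by
      conv_lhs => rw [← hf B, v B hB, ← dLpi' A hA, Lcomm' A hA B hB, iv' A]
    exact e₁.trans e₂.symm
  have main' := fun A (hA : A ∈ Ω) B (hB : B ∈ Ω) => reassoc_of% (main A hA B hB)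
  -- daggered adjointability
  have hσd : ∀ {j j' : J} (h : j ⟶ j'), σ.app j' ≫ (E.map h)† = (D.map h)† ≫ σ.app j := by
    intro j j' h
    have t := congrArg (fun x => x†) (hσ h)
    simpa [DaggerCategory.dag_comp, DaggerCategory.dag_dag] using t
  have hσd' := fun {j j' : J} (h : j ⟶ j') => reassoc_of% (hσd h)
  -- reduction to Ω via weak initiality
  intro j j'
  obtain ⟨A, hA, ⟨h⟩⟩ := hΩ j
  obtain ⟨B, hB, ⟨k⟩⟩ := hΩ j'
  rw [← hMcone h, ← hMcone k, ← hLcone h, ← hLcone k]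
  simp only [DaggerCategory.dag_comp, Category.assoc]
  rw [hσd' h, σ.naturality k, main' A hA B hB]
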